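/- Let x_0 < x_1 < … < x_6 and y_0, …, y_6 be real numbers such that the terrain with points p_i = (x_i, y_i) has visibility graph exactly G'. Then: p_3 is strictly below the segment p_0 p_4; p_3 is strictly below the segment p_2 p_6; p_5 is strictly below the segment p_3 p_6; p_1 lies on or above the segment p_0 p_2; p_3 lies on or above the segment p_1 p_5; and p_5 lies on or above the segment p_4 p_6. -/

import Mathlib

/-- `p j` is strictly below the segment `p i p k`. -/
def StrictlyBelow {n : ℕ} (x y : Fin n → ℝ) (i j k : Fin n) : Prop :=
  (x k - x j) * y i - (x k - x i) * y j + (x j - x i) * y k > 0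

/-- `p j` is strictly above the segment `p i p k`. -/
def StrictlyAbove {n : ℕ} (x y : Fin n → ℝ) (i j k : Fin n) : Prop :=
  (x k - x j) * y i - (x k - x i) * y j + (x j - x i) * y k < 0

/-- `p j` lies on or above the segment `p i p k`. -/
def OnOrAbove {n : ℕ} (x y : Fin n → ℝ) (i j k : Fin n) : Prop :=
  (x k - x j) * y i - (x k - x i) * y j + (x j - x i) * y k ≤ 0

/-- For `i < k`, the points `p i` and `p k` see each other. -/
def Sees {n : ℕ} (x y : Fin n → ℝ) (i k : Fin n) : Prop :=
  (k : ℕ) = (i : ℕ) + 1 ∨ ∀ j : Fin n, i < j → j < k → StrictlyBelow x y i j k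

/-- The visibility graph of the terrain, as a symmetric relation. -/
def VisGraph {n : ℕ} (x y : Fin n → ℝ) (i k : Fin n) : Prop :=
  (i < k ∧ Sees x y i k) ∨ (k < i ∧ Sees x y k i)

/-- The edges `{i,k}` (with `i < k`) of the graph `G'` on `{0,…,6}`. -/
def GpEdge (i k : ℕ) : Prop :=
  (i, k) ∈ [(0,1),(1,2),(2,3),(3,4),(4,5),(5,6),
            (0,3),(0,4),(0,5),(0,6),(1,3),(1,6),(2,6),(3,5),(3,6)]

/-!
The three strict facts are read off the edges `{0,4}`, `{2,6}`, `{3,6}`. The non-edges `{0,2}` and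
`{4,6}` span a single intermediate point, which must therefore block. For `{1,5}`: visibility
composes, since if `p_i` sees `p_k`, `p_k` sees `p_l` and `p_k` is strictly below `p_i p_l`, then
every point between `p_i` and `p_l` is strictly below `p_i p_l`; so `p_3` strictly below `p_1 p_5`
would make `p_1` see `p_5`.
-/

section Terrain

variable {n : ℕ} {x y : Fin n → ℝ} {i j k l : Fin n}

theorem Sees.strictlyBelow (h : Sees x y i k) (hij : i < j) (hjk : j < k) :
    StrictlyBelow x y i j k := by
  rcases h with h | h
  · rw [Fin.lt_def] at hij hjk
    omega
  · exact h j hij hjk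

theorem sees_of_strictlyBelow (hij : (j : ℕ) = i + 1) (hjk : (k : ℕ) = j + 1)
    (h : StrictlyBelow x y i j k) : Sees x y i k := by
  refine Or.inr fun j' hij' hj'k => ?_
  rw [Fin.lt_def] at hij' hj'k
  obtain rfl : j' = j := Fin.ext (by omega)
  exact h

theorem onOrAbove_of_not_sees (hij : (j : ℕ) = i + 1) (hjk : (k : ℕ) = j + 1)
    (h : ¬ Sees x y i k) : OnOrAbove x y i j k :=
  not_lt.1 fun hb => h (sees_of_strictlyBelow hij hjk hb)

/- Up to positive factors, `StrictlyBelow x y i j k` compares the slopes of `p_i p_j` and `p_i p_k`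
(and of `p_j p_k` and `p_i p_k`), so both extension lemmas are transitivity of slopes. -/
theorem StrictlyBelow.extend_right (hx : StrictMono x) (hij : i < j) (hjk : j < k) (hkl : k < l)
    (h₁ : StrictlyBelow x y i j k) (h₂ : StrictlyBelow x y i k l) :
    StrictlyBelow x y i j l := by
  unfold StrictlyBelow at *
  have key : (x k - x i) * ((x l - x j) * y i - (x l - x i) * y j + (x j - x i) * y l) =
      (x l - x i) * ((x k - x j) * y i - (x k - x i) * y j + (x j - x i) * y k) +
        (x j - x i) * ((x l - x k) * y i - (x l - x i) * y k + (x k - x i) * y l) := by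
    ring
  have hik : 0 < x k - x i := sub_pos.2 (hx (hij.trans hjk))
  have hil : 0 < x l - x i := sub_pos.2 (hx ((hij.trans hjk).trans hkl))
  have hij' : 0 < x j - x i := sub_pos.2 (hx hij)
  exact pos_of_mul_pos_right (key ▸ add_pos (mul_pos hil h₁) (mul_pos hij' h₂)) hik.le

theorem StrictlyBelow.extend_left (hx : StrictMono x) (hik : i < k) (hkj : k < j) (hjl : j < l)
    (h₁ : StrictlyBelow x y k j l) (h₂ : StrictlyBelow x y i k l) :
    StrictlyBelow x y i j l := by
  unfold StrictlyBelow at *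
  have key : (x l - x k) * ((x l - x j) * y i - (x l - x i) * y j + (x j - x i) * y l) =
      (x l - x i) * ((x l - x j) * y k - (x l - x k) * y j + (x j - x k) * y l) +
        (x l - x j) * ((x l - x k) * y i - (x l - x i) * y k + (x k - x i) * y l) := by
    ring
  have hkl : 0 < x l - x k := sub_pos.2 (hx (hkj.trans hjl))
  have hil : 0 < x l - x i := sub_pos.2 (hx ((hik.trans hkj).trans hjl))
  have hjl' : 0 < x l - x j := sub_pos.2 (hx hjl)
  exact pos_of_mul_pos_right (key ▸ add_pos (mul_pos hil h₁) (mul_pos hjl' h₂)) hkl.le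

theorem Sees.trans (hx : StrictMono x) (hik : i < k) (hkl : k < l) (h₁ : Sees x y i k)
    (h₂ : Sees x y k l) (hk : StrictlyBelow x y i k l) : Sees x y i l := by
  refine Or.inr fun j hij hjl => ?_
  rcases lt_trichotomy j k with hjk | rfl | hkj
  · exact (h₁.strictlyBelow hij hjk).extend_right hx hij hjk hkl hk
  · exact hk
  · exact (h₂.strictlyBelow hkj hjl).extend_left hx hik hkj hjl hk

end Terrain

instance (i k : ℕ) : Decidable (GpEdge i k) := by
  unfold GpEdge
  infer_instance

theorem Gp_terrain_satisfies_constraints (x y : Fin 7 → ℝ) (hx : StrictMono x)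
    (hvg : ∀ i k : Fin 7, i < k → (Sees x y i k ↔ GpEdge (i : ℕ) (k : ℕ))) :
    StrictlyBelow x y 0 3 4 ∧
    StrictlyBelow x y 2 3 6 ∧
    StrictlyBelow x y 3 5 6 ∧
    OnOrAbove x y 0 1 2 ∧
    OnOrAbove x y 1 3 5 ∧
    OnOrAbove x y 4 5 6 := by
  have sees (i k : Fin 7) (hik : i < k := by decide) (he : GpEdge i k := by decide) :
      Sees x y i k :=
    (hvg i k hik).2 he
  have blind (i k : Fin 7) (hik : i < k := by decide) (he : ¬ GpEdge i k := by decide) :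
      ¬ Sees x y i k :=
    mt (hvg i k hik).1 he
  exact ⟨(sees 0 4).strictlyBelow (by decide) (by decide),
    (sees 2 6).strictlyBelow (by decide) (by decide),
    (sees 3 6).strictlyBelow (by decide) (by decide),
    onOrAbove_of_not_sees rfl rfl (blind 0 2),
    not_lt.1 fun h => absurd ((sees 1 3).trans hx (by decide) (by decide) (sees 3 5) h) (blind 1 5),
    onOrAbove_of_not_sees rfl rfl (blind 4 6)⟩
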